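/- arXiv:2312.17131 — 2 statements merged into one kernel-verified Lean document; each statement's English description precedes it below -/
import Mathlib

section
/- The function g₁(b) = h₁(b)/h₁'(b) is strictly increasing on (0,∞), satisfies lim_{b↓0} g₁(b) = 0, and lim_{b↑∞} g₁(b) = 1/θ₊. -/
open Real Filter Set

/-- Positive root θ₊ of (σ²/2)r² + ηr − δ = 0. -/
noncomputable def thetaP (σ η δ : ℝ) : ℝ := (-η + Real.sqrt (η ^ 2 + 2 * σ ^ 2 * δ)) / σ ^ 2

/-- Negative root θ₋ of (σ²/2)r² + ηr − δ = 0. -/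
noncomputable def thetaM (σ η δ : ℝ) : ℝ := (-η - Real.sqrt (η ^ 2 + 2 * σ ^ 2 * δ)) / σ ^ 2

/-- h₁(x) = e^{θ₊x} − e^{θ₋x}. -/
noncomputable def h1 (σ η δ : ℝ) (x : ℝ) : ℝ :=
  Real.exp (thetaP σ η δ * x) - Real.exp (thetaM σ η δ * x)

/-- h₁'(x) = θ₊e^{θ₊x} − θ₋e^{θ₋x}. -/
noncomputable def h1' (σ η δ : ℝ) (x : ℝ) : ℝ :=
  thetaP σ η δ * Real.exp (thetaP σ η δ * x) - thetaM σ η δ * Real.exp (thetaM σ η δ * x)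

/-- g₁(b) = h₁(b)/h₁'(b). -/
noncomputable def g1 (σ η δ : ℝ) (b : ℝ) : ℝ := h1 σ η δ b / h1' σ η δ b

/-
Since √(η² + 2σ²δ) > |η|, we have a = θ₊ > 0 > c = θ₋. Then
g₁(b) = (e^{ab} − e^{cb}) / (a e^{ab} − c e^{cb}), whose numerator has the denominator as
derivative, so the quotient rule gives g₁'(b) = (a − c)² e^{(a+c)b} / (a e^{ab} − c e^{cb})² > 0;
moreover g₁(0) = 0 and g₁ is continuous at 0. Dividing numerator and denominator by e^{ab}
gives (1 − e^{(c−a)b}) / (a − c e^{(c−a)b}) → 1/a.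
-/

open scoped Topology

theorem abs_lt_sqrt_sq_add (η : ℝ) {ε : ℝ} (hε : 0 < ε) : |η| < √(η ^ 2 + ε) :=
  lt_sqrt_of_sq_lt (by rw [sq_abs]; linarith)

theorem thetaP_pos {σ : ℝ} (η : ℝ) {δ : ℝ} (hσ : σ ≠ 0) (hδ : 0 < δ) : 0 < thetaP σ η δ := by
  have := abs_lt_sqrt_sq_add η (by positivity : 0 < 2 * σ ^ 2 * δ)
  exact div_pos (by linarith [le_abs_self η]) (by positivity)

theorem thetaM_neg {σ : ℝ} (η : ℝ) {δ : ℝ} (hσ : σ ≠ 0) (hδ : 0 < δ) : thetaM σ η δ < 0 := by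
  have := abs_lt_sqrt_sq_add η (by positivity : 0 < 2 * σ ^ 2 * δ)
  exact div_neg_of_neg_of_pos (by linarith [neg_abs_le η]) (by positivity)

noncomputable def expDiffRatio (a c b : ℝ) : ℝ :=
  (exp (a * b) - exp (c * b)) / (a * exp (a * b) - c * exp (c * b))

theorem g1_eq_expDiffRatio (σ η δ : ℝ) :
    g1 σ η δ = expDiffRatio (thetaP σ η δ) (thetaM σ η δ) := rfl

section ExpDiffRatio

variable {a c : ℝ}

theorem hasDerivAt_exp_const_mul (a x : ℝ) :
    HasDerivAt (fun x => exp (a * x)) (a * exp (a * x)) x := by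
  simpa [mul_comm] using ((hasDerivAt_id x).const_mul a).exp

theorem expDiffRatio_denom_pos (hc : c < 0) (ha : 0 < a) (x : ℝ) :
    0 < a * exp (a * x) - c * exp (c * x) := by
  have : c * exp (c * x) < 0 := mul_neg_of_neg_of_pos hc (exp_pos _)
  linarith [mul_pos ha (exp_pos (a * x))]

theorem hasDerivAt_expDiffRatio (hc : c < 0) (ha : 0 < a) (x : ℝ) :
    HasDerivAt (expDiffRatio a c)
      ((a - c) ^ 2 * exp ((a + c) * x) / (a * exp (a * x) - c * exp (c * x)) ^ 2) x := by
  have hnum : HasDerivAt (fun x => exp (a * x) - exp (c * x))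
      (a * exp (a * x) - c * exp (c * x)) x :=
    (hasDerivAt_exp_const_mul a x).sub (hasDerivAt_exp_const_mul c x)
  have hden : HasDerivAt (fun x => a * exp (a * x) - c * exp (c * x))
      (a * (a * exp (a * x)) - c * (c * exp (c * x))) x :=
    ((hasDerivAt_exp_const_mul a x).const_mul a).sub ((hasDerivAt_exp_const_mul c x).const_mul c)
  refine (hnum.div hden (expDiffRatio_denom_pos hc ha x).ne').congr_deriv ?_
  rw [add_mul, exp_add]
  ring

theorem strictMono_expDiffRatio (hc : c < 0) (ha : 0 < a) : StrictMono (expDiffRatio a c) :=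
  strictMono_of_hasDerivAt_pos (hasDerivAt_expDiffRatio hc ha) fun x =>
    div_pos (mul_pos (pow_pos (by linarith) 2) (exp_pos _))
      (pow_pos (expDiffRatio_denom_pos hc ha x) 2)

theorem tendsto_expDiffRatio_nhdsGT_zero (hc : c < 0) (ha : 0 < a) :
    Tendsto (expDiffRatio a c) (𝓝[>] 0) (𝓝 0) := by
  have hcont := (hasDerivAt_expDiffRatio hc ha 0).continuousAt.tendsto
  rw [show expDiffRatio a c 0 = 0 by simp [expDiffRatio]] at hcont
  exact hcont.mono_left nhdsWithin_le_nhds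

theorem expDiffRatio_eq (a c b : ℝ) :
    expDiffRatio a c b = (1 - exp ((c - a) * b)) / (a - c * exp ((c - a) * b)) := by
  have hE : exp ((c - a) * b) = exp (c * b) / exp (a * b) := by
    rw [sub_mul, exp_sub]
  rw [expDiffRatio, hE]
  field_simp

theorem tendsto_expDiffRatio_atTop (hca : c < a) (ha : a ≠ 0) :
    Tendsto (expDiffRatio a c) atTop (𝓝 (1 / a)) := by
  have hdecay : Tendsto (fun b => exp ((c - a) * b)) atTop (𝓝 0) :=
    tendsto_exp_atBot.comp (tendsto_id.const_mul_atTop_of_neg (by linarith))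
  have hlim := (hdecay.const_sub 1).div (hdecay.const_mul c |>.const_sub a) (by simpa using ha)
  simp only [sub_zero, mul_zero] at hlim
  exact hlim.congr fun b => (expDiffRatio_eq a c b).symm

end ExpDiffRatio

theorem g1_strictMonoOn_and_limits_general (σ η δ : ℝ) (hσ : 0 < σ) (hδ : 0 < δ) :
    StrictMonoOn (g1 σ η δ) (Set.Ioi 0) ∧
    Tendsto (g1 σ η δ) (nhdsWithin 0 (Set.Ioi 0)) (nhds 0) ∧
    Tendsto (g1 σ η δ) atTop (nhds (1 / thetaP σ η δ)) := by
  have ha := thetaP_pos η hσ.ne' hδ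
  have hc := thetaM_neg η hσ.ne' hδ
  rw [g1_eq_expDiffRatio]
  exact ⟨(strictMono_expDiffRatio hc ha).strictMonoOn _, tendsto_expDiffRatio_nhdsGT_zero hc ha,
    tendsto_expDiffRatio_atTop (hc.trans ha) ha.ne'⟩

theorem g1_strictMonoOn_and_limits (σ η δ : ℝ) (hσ : 0 < σ) (hη : 0 < η) (hδ : 0 < δ) :
    StrictMonoOn (g1 σ η δ) (Set.Ioi 0) ∧
    Tendsto (g1 σ η δ) (nhdsWithin 0 (Set.Ioi 0)) (nhds 0) ∧
    Tendsto (g1 σ η δ) atTop (nhds (1 / thetaP σ η δ)) :=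
  g1_strictMonoOn_and_limits_general σ η δ hσ hδ
end

section
/- Let v : [0,∞) → ℝ be continuously differentiable, increasing and concave, and suppose b := inf{x > 0 : v'(x) < 1} is finite. Then for every x > 0: if x ≤ b then the supremum over ξ ∈ [0,x] of (ξ + v(x−ξ) − v(x)) equals 0, and if x > b then this supremum equals x − b + v(b) − v(x). -/
open Real Filter Set

/-!
With `w t = v t - t` the payout is `ξ + v (x - ξ) - v x = w (x - ξ) - w x`, so the supremum is
`max_{[0, x]} w - w x`. Concavity makes `v'` antitone, so `v' ≥ 1` on `(0, b)` and `v' < 1` on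
`(b, ∞)`: `w` increases up to `b` and decreases after it, hence is maximal over `[0, x]` at
`min x b`.
-/

lemma isGreatest_image_Icc_of_monotoneOn_of_antitoneOn {α β : Type*} [LinearOrder α] [Preorder β]
    {w : α → β} {a b x : α} (hab : a ≤ b) (hax : a ≤ x) (hmono : MonotoneOn w (Icc a b)) (hanti : AntitoneOn w (Ici b)) :
    IsGreatest (w '' Icc a x) (w (min x b)) := by
  refine ⟨mem_image_of_mem w ⟨le_min hax hab, min_le_left x b⟩, ?_⟩
  rintro _ ⟨t, ⟨hat, htx⟩, rfl⟩
  rcases le_total t b with htb | hbt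
  · exact hmono ⟨hat, htb⟩ ⟨le_min hax hab, min_le_right x b⟩ (le_min htx htb)
  · rw [min_eq_right (hbt.trans htx)]
    exact hanti self_mem_Ici hbt hbt

lemma le_of_lt_sInf_setOf_lt {f : ℝ → ℝ} {c t : ℝ} (ht : 0 < t)
    (htb : t < sInf {x | 0 < x ∧ f x < c}) : c ≤ f t := by
  by_contra! h
  have hbdd : BddBelow {x | 0 < x ∧ f x < c} := ⟨0, fun y hy => hy.1.le⟩
  exact (csInf_le hbdd ⟨ht, h⟩).not_gt htb

lemma lt_of_sInf_setOf_lt_lt {f : ℝ → ℝ} {c t : ℝ} (hf : AntitoneOn f (Ioi 0))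
    (hne : {x | 0 < x ∧ f x < c}.Nonempty) (ht : sInf {x | 0 < x ∧ f x < c} < t) : f t < c := by
  obtain ⟨y, ⟨hy0, hyc⟩, hyt⟩ := exists_lt_of_csInf_lt hne ht
  exact (hf hy0 (hy0.trans hyt) hyt.le).trans_lt hyc

lemma hasDerivAt_sub_id {v : ℝ → ℝ} {t : ℝ} (hv : DifferentiableAt ℝ v t) :
    HasDerivAt (fun s => v s - s) (deriv v t - 1) t :=
  hv.hasDerivAt.sub (hasDerivAt_id t)

section SubId

variable {v : ℝ → ℝ} {D : Set ℝ}

lemma monotoneOn_sub_id_of_one_le_deriv (hD : Convex ℝ D) (hv : ContinuousOn v D)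
    (hdiff : DifferentiableOn ℝ v (interior D)) (h : ∀ t ∈ interior D, 1 ≤ deriv v t) :
    MonotoneOn (fun t => v t - t) D := by
  refine monotoneOn_of_deriv_nonneg hD (hv.sub continuousOn_id) (hdiff.sub differentiableOn_id)
    fun t ht => ?_
  rw [(hasDerivAt_sub_id (hdiff.differentiableAt (isOpen_interior.mem_nhds ht))).deriv]
  linarith [h t ht]

lemma antitoneOn_sub_id_of_deriv_le_one (hD : Convex ℝ D) (hv : ContinuousOn v D)
    (hdiff : DifferentiableOn ℝ v (interior D)) (h : ∀ t ∈ interior D, deriv v t ≤ 1) :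
    AntitoneOn (fun t => v t - t) D := by
  refine antitoneOn_of_deriv_nonpos hD (hv.sub continuousOn_id) (hdiff.sub differentiableOn_id)
    fun t ht => ?_
  rw [(hasDerivAt_sub_id (hdiff.differentiableAt (isOpen_interior.mem_nhds ht))).deriv]
  linarith [h t ht]

end SubId

lemma image_payout_Icc (v : ℝ → ℝ) (x : ℝ) :
    (fun ξ => ξ + v (x - ξ) - v x) '' Icc 0 x =
      (· - (v x - x)) '' ((fun t => v t - t) '' Icc 0 x) := by
  have hreflect : (fun ξ => x - ξ) '' Icc 0 x = Icc 0 x := by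
    rw [image_const_sub_Icc, sub_self, sub_zero]
  conv_rhs => rw [← hreflect, image_image, image_image]
  congr 1
  funext ξ
  ring

section Barrier

variable {v : ℝ → ℝ}

lemma monotoneOn_sub_id_Icc_sInf_setOf_deriv_lt (hcont : ContinuousOn v (Ici 0))
    (hdiff : DifferentiableOn ℝ v (Ioi 0)) :
    MonotoneOn (fun t => v t - t) (Icc 0 (sInf {x | 0 < x ∧ deriv v x < 1})) := by
  refine monotoneOn_sub_id_of_one_le_deriv (convex_Icc _ _) (hcont.mono Icc_subset_Ici_self)
    ?_ fun t ht => ?_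
  · rw [interior_Icc]
    exact hdiff.mono Ioo_subset_Ioi_self
  · rw [interior_Icc] at ht
    exact le_of_lt_sInf_setOf_lt ht.1 ht.2

lemma antitoneOn_sub_id_Ici_sInf_setOf_deriv_lt (hcont : ContinuousOn v (Ici 0))
    (hdiff : DifferentiableOn ℝ v (Ioi 0)) (hconc : ConcaveOn ℝ (Ici 0) v)
    (hne : {x | 0 < x ∧ deriv v x < 1}.Nonempty) :
    AntitoneOn (fun t => v t - t) (Ici (sInf {x | 0 < x ∧ deriv v x < 1})) := by
  have hb0 : 0 ≤ sInf {x | 0 < x ∧ deriv v x < 1} := Real.sInf_nonneg fun _ hy => hy.1.le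
  have hderiv_anti : AntitoneOn (deriv v) (Ioi 0) :=
    (hconc.subset Ioi_subset_Ici_self (convex_Ioi 0)).antitoneOn_deriv
      fun t ht => hdiff.differentiableAt (isOpen_Ioi.mem_nhds ht)
  refine antitoneOn_sub_id_of_deriv_le_one (convex_Ici _) (hcont.mono (Ici_subset_Ici.2 hb0))
    ?_ fun t ht => ?_
  · rw [interior_Ici]
    exact hdiff.mono (Ioi_subset_Ioi hb0)
  · rw [interior_Ici] at ht
    exact (lt_of_sInf_setOf_lt_lt hderiv_anti hne ht).le

end Barrier

theorem sup_payout_barrier_general (v : ℝ → ℝ) (b : ℝ)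
    (hC1 : ContDiffOn ℝ 1 v (Set.Ici 0))
    (hconc : ConcaveOn ℝ (Set.Ici 0) v)
    (hbdef : b = sInf {x : ℝ | 0 < x ∧ deriv v x < 1})
    (hbne : {x : ℝ | 0 < x ∧ deriv v x < 1}.Nonempty) :
    ∀ x : ℝ, 0 < x →
      (x ≤ b → sSup ((fun ξ => ξ + v (x - ξ) - v x) '' Set.Icc 0 x) = 0) ∧
      (b < x → sSup ((fun ξ => ξ + v (x - ξ) - v x) '' Set.Icc 0 x) = x - b + v b - v x) := by
  have hcont : ContinuousOn v (Ici 0) := hC1.continuousOn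
  have hdiff : DifferentiableOn ℝ v (Ioi 0) :=
    (hC1.differentiableOn one_ne_zero).mono Ioi_subset_Ici_self
  have hb0 : 0 ≤ b := hbdef ▸ Real.sInf_nonneg fun _ hy => hy.1.le
  have hmono : MonotoneOn (fun t => v t - t) (Icc 0 b) :=
    hbdef ▸ monotoneOn_sub_id_Icc_sInf_setOf_deriv_lt hcont hdiff
  have hanti : AntitoneOn (fun t => v t - t) (Ici b) :=
    hbdef ▸ antitoneOn_sub_id_Ici_sInf_setOf_deriv_lt hcont hdiff hconc hbne
  intro x hx
  have hsup : sSup ((fun ξ => ξ + v (x - ξ) - v x) '' Icc 0 x) =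
      v (min x b) - min x b - (v x - x) := by
    rw [image_payout_Icc]
    exact (Monotone.map_isGreatest (fun _ _ h => sub_le_sub_right h (v x - x))
      (isGreatest_image_Icc_of_monotoneOn_of_antitoneOn hb0 hx.le hmono hanti)).csSup_eq
  refine ⟨fun hxb => ?_, fun hbx => ?_⟩
  · rw [hsup, min_eq_left hxb]
    ring
  · rw [hsup, min_eq_right hbx.le]
    ring

theorem sup_payout_barrier (v : ℝ → ℝ) (b : ℝ)
    (hC1 : ContDiffOn ℝ 1 v (Set.Ici 0))
    (hmono : MonotoneOn v (Set.Ici 0))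
    (hconc : ConcaveOn ℝ (Set.Ici 0) v)
    (hbdef : b = sInf {x : ℝ | 0 < x ∧ deriv v x < 1})
    (hbne : {x : ℝ | 0 < x ∧ deriv v x < 1}.Nonempty) :
    ∀ x : ℝ, 0 < x →
      (x ≤ b → sSup ((fun ξ => ξ + v (x - ξ) - v x) '' Set.Icc 0 x) = 0) ∧
      (b < x → sSup ((fun ξ => ξ + v (x - ξ) - v x) '' Set.Icc 0 x) = x - b + v b - v x) :=
  sup_payout_barrier_general v b hC1 hconc hbdef hbne
end
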